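/- Let f₀,F : ℝⁿ×ℝ^d → ℝ be C² functions and let (x̄,w̄) satisfy F(x̄,w̄) = 0, ∇ₓF(x̄,w̄) ≠ 0, and ∇ₓf₀(x̄,w̄) = 0 (so x̄ ∈ S(w̄) with Lagrange multiplier λ = 0). Define the linear maps A'₁(v,γ) = ∇²ₓₓf₀(x̄,w̄)v + γ∇ₓF(x̄,w̄) (with values in ℝⁿ) and A'₂(v,γ) = ∇²_{wx}f₀(x̄,w̄)v + γ∇_wF(x̄,w̄) (with values in ℝ^d) for (v,γ) ∈ ℝⁿ×ℝ. Assume: (1) ker A'₁ ∩ ker A'₂ = {(0,0)}; (2) every (v,γ) ∈ ker A'₁ with ⟨∇ₓF(x̄,w̄),v⟩ = 0 lies in ker A'₂; (3) every (v,γ) ∈ ker A'₁ with ⟨∇ₓF(x̄,w̄),v⟩ > 0 and γ ≥ 0 lies in ker A'₂; (4) every v ∈ ℝⁿ with ∇²ₓₓf₀(x̄,w̄)v = 0 and ⟨∇ₓF(x̄,w̄),v⟩ < 0 satisfies ∇²_{wx}f₀(x̄,w̄)v = 0. Then the stationary point set map S has the Robinson stability at ω₀=(x̄,w̄,0). -/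

import Mathlib

noncomputable section

/-- The Euclidean space `ℝⁿ`. -/
abbrev En (n : ℕ) := EuclideanSpace ℝ (Fin n)

/-- The partial gradient in `x` of a function `f : ℝⁿ × ℝ^d → ℝ`. -/
def gradx {n d : ℕ} (f : En n × En d → ℝ) (x : En n) (w : En d) : En n :=
  gradient (fun y => f (y, w)) x

/-- The stationary (KKT) point set `S(w)` of the problem
`minimize f₀(x,w) subject to F(x,w) ≤ 0`. -/
def Sgen {n d : ℕ} (f₀ F : En n × En d → ℝ) (w : En d) : Set (En n) :=
  {x | F (x, w) ≤ 0 ∧ ∃ μ : ℝ, 0 ≤ μ ∧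
    gradx f₀ x w + μ • gradx F x w = 0 ∧ μ * F (x, w) = 0}

/-- The set `Φ(x,w) = {∇ₓf₀(x,w) + μ∇ₓF(x,w) : μ ≥ 0, μ·F(x,w) = 0}` when
`F(x,w) ≤ 0` (and `∅` otherwise). -/
def PhiGen {n d : ℕ} (f₀ F : En n × En d → ℝ) (x : En n) (w : En d) : Set (En n) :=
  {z | F (x, w) ≤ 0 ∧ ∃ μ : ℝ, 0 ≤ μ ∧ μ * F (x, w) = 0 ∧
    z = gradx f₀ x w + μ • gradx F x w}

/-- `S` has the Robinson stability at `ω₀ = (x0, w0, 0)`: there exist `r > 0`, `γ > 0`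
and neighborhoods `U` of `x0`, `V` of `w0` such that `d(x, S(w)) ≤ r · d(0, Φ(x,w))`
for all `(x,w) ∈ U × V` with `Φ(x,w) ≠ ∅` and `d(0, Φ(x,w)) < γ`. -/
def RobinsonStable {n d : ℕ} (f₀ F : En n × En d → ℝ) (w0 : En d) (x0 : En n) : Prop :=
  ∃ r : ℝ, 0 < r ∧ ∃ γ : ℝ, 0 < γ ∧ ∃ U ∈ nhds x0, ∃ V ∈ nhds w0,
    ∀ x ∈ U, ∀ w ∈ V, (PhiGen f₀ F x w).Nonempty →
      Metric.infDist 0 (PhiGen f₀ F x w) < γ →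
      Metric.infDist x (Sgen f₀ F w) ≤ r * Metric.infDist 0 (PhiGen f₀ F x w)


/-- The partial gradient in `w` of a function `f : ℝⁿ × ℝ^d → ℝ`. -/
def gradw {n d : ℕ} (f : En n × En d → ℝ) (x : En n) (w : En d) : En d :=
  gradient (fun u => f (x, u)) w

/-- The Hessian `∇²ₓₓf(x0,w0)` as a linear map `ℝⁿ → ℝⁿ`. -/
def hessxx {n d : ℕ} (f : En n × En d → ℝ) (x0 : En n) (w0 : En d) : En n →L[ℝ] En n :=
  fderiv ℝ (fun y => gradx f y w0) x0

/-- The mixed second-order derivative `∇²_{wx}f(x0,w0)`, regarded as a linear map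
`ℝⁿ → ℝ^d` (the adjoint of the derivative in `w` of `w ↦ ∇ₓf(x0,w)`). -/
def mixwx {n d : ℕ} (f : En n × En d → ℝ) (x0 : En n) (w0 : En d) : En n →L[ℝ] En d :=
  ContinuousLinearMap.adjoint (fderiv ℝ (fun w => gradx f x0 w) w0)

/-! ### Auxiliary lemmas for the proof of `stmt9` -/

section Aux

variable {n d : ℕ}

lemma gradx_eq_toDual (f : En n × En d → ℝ) (hf : ContDiff ℝ 2 f) (p : En n × En d) :
    gradx f p.1 p.2 = (InnerProductSpace.toDual ℝ (En n)).symm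
      ((fderiv ℝ f p).comp (ContinuousLinearMap.inl ℝ (En n) (En d))) := by
  have hdf : DifferentiableAt ℝ f (p.1, p.2) :=
    (hf.differentiable (by norm_num)).differentiableAt
  have h1 : HasFDerivAt (fun y : En n => f (y, p.2))
      ((fderiv ℝ f (p.1, p.2)).comp (ContinuousLinearMap.inl ℝ (En n) (En d))) p.1 :=
    hdf.hasFDerivAt.comp p.1 (hasFDerivAt_prodMk_left p.1 p.2)
  unfold gradx gradient
  rw [h1.fderiv]

lemma contDiff_gradx (f : En n × En d → ℝ) (hf : ContDiff ℝ 2 f) :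
    ContDiff ℝ 1 (fun p : En n × En d => gradx f p.1 p.2) := by
  have h2 : ContDiff ℝ 1 (fderiv ℝ f) := hf.fderiv_right (by norm_num)
  have h3 : ContDiff ℝ 1 (fun p : En n × En d =>
      (fderiv ℝ f p).comp (ContinuousLinearMap.inl ℝ (En n) (En d))) :=
    h2.clm_comp contDiff_const
  have h4 := ((InnerProductSpace.toDual ℝ (En n)).symm.toContinuousLinearEquiv :
      (StrongDual ℝ (En n)) ≃L[ℝ] En n).toContinuousLinearMap.contDiff.comp h3
  convert h4 using 1
  funext p
  exact gradx_eq_toDual f hf p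

/-- The master map `Λ(x,(w,t)) = (∇ₓf₀(x,w) + t∇ₓF(x,w), (w,t))`. -/
def LamMap (f₀ F : En n × En d → ℝ) : (En n × (En d × ℝ)) → (En n × (En d × ℝ)) :=
  fun z => (gradx f₀ z.1 z.2.1 + z.2.2 • gradx F z.1 z.2.1, z.2)

variable (f₀ F : En n × En d → ℝ) (x0 : En n) (w0 : En d)

lemma contDiff_LamMap (hf₀ : ContDiff ℝ 2 f₀) (hF : ContDiff ℝ 2 F) :
    ContDiff ℝ 1 (LamMap f₀ F) := by
  have hproj : ContDiff ℝ 1 (fun z : En n × (En d × ℝ) => (z.1, z.2.1)) :=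
    contDiff_fst.prodMk (contDiff_snd.fst)
  have h1 : ContDiff ℝ 1 (fun z : En n × (En d × ℝ) => gradx f₀ z.1 z.2.1) :=
    (contDiff_gradx f₀ hf₀).comp hproj
  have h2 : ContDiff ℝ 1 (fun z : En n × (En d × ℝ) => gradx F z.1 z.2.1) :=
    (contDiff_gradx F hF).comp hproj
  have h3 : ContDiff ℝ 1 (fun z : En n × (En d × ℝ) => z.2.2) := contDiff_snd.snd
  exact (h1.add (h3.smul h2)).prodMk contDiff_snd

lemma diffAt_LamMap (hf₀ : ContDiff ℝ 2 f₀) (hF : ContDiff ℝ 2 F)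
    (z : En n × (En d × ℝ)) : DifferentiableAt ℝ (LamMap f₀ F) z :=
  ((contDiff_LamMap f₀ F hf₀ hF).differentiable (by norm_num)).differentiableAt

/-- second component of the derivative of Λ is the identity on the second factor -/
lemma LamMap_fderiv_snd (hf₀ : ContDiff ℝ 2 f₀) (hF : ContDiff ℝ 2 F)
    (p : En n × (En d × ℝ)) (z : En n × (En d × ℝ)) :
    ((fderiv ℝ (LamMap f₀ F) p) z).2 = z.2 := by
  set S2 := ContinuousLinearMap.snd ℝ (En n) (En d × ℝ)
  have h1 : HasFDerivAt (Prod.snd ∘ LamMap f₀ F)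
      (S2.comp (fderiv ℝ (LamMap f₀ F) p)) p :=
    (hasFDerivAt_snd (p := LamMap f₀ F p)).comp p (diffAt_LamMap f₀ F hf₀ hF p).hasFDerivAt
  have h2 : HasFDerivAt (Prod.snd ∘ LamMap f₀ F) S2 p := hasFDerivAt_snd
  have h3 := h1.unique h2
  calc ((fderiv ℝ (LamMap f₀ F) p) z).2 = (S2.comp (fderiv ℝ (LamMap f₀ F) p)) z := rfl
    _ = S2 z := by rw [h3]
    _ = z.2 := rfl

lemma hasFDerivAt_gradx_x (hf₀ : ContDiff ℝ 2 f₀) :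
    HasFDerivAt (fun x => gradx f₀ x w0) (hessxx f₀ x0 w0) x0 := by
  have h1 : ContDiff ℝ 1 (fun x : En n => gradx f₀ x w0) :=
    (contDiff_gradx f₀ hf₀).comp (contDiff_id.prodMk contDiff_const)
  exact ((h1.differentiable (by norm_num)).differentiableAt).hasFDerivAt

/-- first component of the derivative of Λ in the x-direction is the Hessian -/
lemma LamMap_fderiv_x (hf₀ : ContDiff ℝ 2 f₀) (hF : ContDiff ℝ 2 F) (v : En n) :
    ((fderiv ℝ (LamMap f₀ F) (x0, (w0, (0:ℝ)))) (v, 0)).1 = hessxx f₀ x0 w0 v := by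
  set D := fderiv ℝ (LamMap f₀ F) (x0, (w0, (0:ℝ)))
  set ι := ContinuousLinearMap.inl ℝ (En n) (En d × ℝ)
  have hc : HasFDerivAt (fun x : En n => (x, ((w0, (0:ℝ)) : En d × ℝ))) ι x0 :=
    hasFDerivAt_prodMk_left x0 (w0, (0:ℝ))
  have h1 : HasFDerivAt (LamMap f₀ F ∘ (fun x : En n => (x, ((w0, (0:ℝ)) : En d × ℝ))))
      (D.comp ι) x0 :=
    (diffAt_LamMap f₀ F hf₀ hF _).hasFDerivAt.comp x0 hc
  have heq : (LamMap f₀ F ∘ (fun x : En n => (x, ((w0, (0:ℝ)) : En d × ℝ))))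
      = fun x : En n => (gradx f₀ x w0, ((w0, (0:ℝ)) : En d × ℝ)) := by
    funext x
    simp [LamMap]
  rw [heq] at h1
  have h2 : HasFDerivAt (fun x : En n => (gradx f₀ x w0, ((w0, (0:ℝ)) : En d × ℝ)))
      ((hessxx f₀ x0 w0).prod 0) x0 :=
    (hasFDerivAt_gradx_x f₀ x0 w0 hf₀).prodMk (hasFDerivAt_const _ _)
  have h3 := h1.unique h2
  calc (D (v, 0)).1 = ((D.comp ι) v).1 := rfl
    _ = (((hessxx f₀ x0 w0).prod 0) v).1 := by rw [h3]
    _ = hessxx f₀ x0 w0 v := rfl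

/-- first component of the derivative of Λ in the t-direction is `∇ₓF(x0,w0)`,
assuming `∇ₓf₀(x0,w0) = 0`. -/
lemma LamMap_fderiv_t (hf₀ : ContDiff ℝ 2 f₀) (hF : ContDiff ℝ 2 F)
    (hstat : gradx f₀ x0 w0 = 0) :
    ((fderiv ℝ (LamMap f₀ F) (x0, (w0, (0:ℝ)))) (0, (0, 1))).1 = gradx F x0 w0 := by
  set D := fderiv ℝ (LamMap f₀ F) (x0, (w0, (0:ℝ)))
  have hc : HasDerivAt (fun t : ℝ => ((x0, (w0, t)) : En n × (En d × ℝ)))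
      ((0, (0, 1)) : En n × (En d × ℝ)) 0 :=
    (hasDerivAt_const (0:ℝ) x0).prodMk ((hasDerivAt_const (0:ℝ) w0).prodMk (hasDerivAt_id 0))
  have h1 : HasDerivAt (fun t : ℝ => LamMap f₀ F (x0, (w0, t))) (D (0, (0, 1))) 0 := by
    have := ((diffAt_LamMap f₀ F hf₀ hF (x0, (w0, (0:ℝ)))).hasFDerivAt).comp_hasDerivAt 0 hc
    exact this
  have heq : (fun t : ℝ => LamMap f₀ F (x0, (w0, t)))
      = fun t : ℝ => ((t • gradx F x0 w0, (w0, t)) : En n × (En d × ℝ)) := by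
    funext t
    simp [LamMap, hstat]
  rw [heq] at h1
  have h2 : HasDerivAt (fun t : ℝ => ((t • gradx F x0 w0, (w0, t)) : En n × (En d × ℝ)))
      ((gradx F x0 w0, (0, 1)) : En n × (En d × ℝ)) 0 := by
    have ha : HasDerivAt (fun t : ℝ => t • gradx F x0 w0) ((1:ℝ) • gradx F x0 w0) 0 :=
      (hasDerivAt_id 0).smul_const (gradx F x0 w0)
    rw [one_smul] at ha
    exact ha.prodMk ((hasDerivAt_const (0:ℝ) w0).prodMk (hasDerivAt_id 0))
  have h3 := h1.unique h2
  rw [h3]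

end Aux

open Metric Set

set_option maxHeartbeats 4000000 in
open RealInnerProductSpace in
/-- Degenerate case `λ = 0`: under the kernel conditions (1)–(4) on
`A'₁(v,γ) = ∇²ₓₓf₀ v + γ∇ₓF` and `A'₂(v,γ) = ∇²_{wx}f₀ v + γ∇_wF`, the map `S` has
the Robinson stability at `ω₀ = (x0, w0, 0)`. -/
theorem stmt9 {n d : ℕ} (f₀ F : En n × En d → ℝ)
    (hf₀ : ContDiff ℝ 2 f₀) (hF : ContDiff ℝ 2 F)
    (x0 : En n) (w0 : En d)
    (hFeq : F (x0, w0) = 0)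
    (hgF : gradx F x0 w0 ≠ 0)
    (hstat : gradx f₀ x0 w0 = 0)
    (h1 : ∀ (v : En n) (γ : ℝ),
      hessxx f₀ x0 w0 v + γ • gradx F x0 w0 = 0 →
      mixwx f₀ x0 w0 v + γ • gradw F x0 w0 = 0 → v = 0 ∧ γ = 0)
    (h2 : ∀ (v : En n) (γ : ℝ),
      hessxx f₀ x0 w0 v + γ • gradx F x0 w0 = 0 →
      ⟪gradx F x0 w0, v⟫ = 0 →
      mixwx f₀ x0 w0 v + γ • gradw F x0 w0 = 0)
    (h3 : ∀ (v : En n) (γ : ℝ),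
      hessxx f₀ x0 w0 v + γ • gradx F x0 w0 = 0 →
      0 < ⟪gradx F x0 w0, v⟫ → 0 ≤ γ →
      mixwx f₀ x0 w0 v + γ • gradw F x0 w0 = 0)
    (h4 : ∀ v : En n,
      hessxx f₀ x0 w0 v = 0 → ⟪gradx F x0 w0, v⟫ < 0 →
      mixwx f₀ x0 w0 v = 0) :
    RobinsonStable f₀ F w0 x0 := by
  classical
  have hb : (0:ℝ) < ‖gradx F x0 w0‖ := norm_pos_iff.mpr hgF
  -- Step 1: `H = ∇²ₓₓf₀(x0,w0)` is injective
  have hHker : ∀ v : En n, hessxx f₀ x0 w0 v = 0 → v = 0 := by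
    intro v hv
    have hA1 : hessxx f₀ x0 w0 v + (0:ℝ) • gradx F x0 w0 = 0 := by simpa using hv
    rcases lt_trichotomy (inner ℝ (gradx F x0 w0) v : ℝ) 0 with hlt | heq | hgt
    · have hM := h4 v hv hlt
      exact (h1 v 0 hA1 (by simpa using hM)).1
    · exact (h1 v 0 hA1 (h2 v 0 hA1 heq)).1
    · exact (h1 v 0 hA1 (h3 v 0 hA1 hgt le_rfl)).1
  have hHinj : Function.Injective (hessxx f₀ x0 w0) := by
    intro a b hab
    have := hHker (a - b) (by rw [map_sub, hab, sub_self])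
    exact sub_eq_zero.mp this
  have hHsurj : Function.Surjective (hessxx f₀ x0 w0) :=
    (LinearMap.injective_iff_surjective
      (f := ((hessxx f₀ x0 w0 : En n →L[ℝ] En n) : En n →ₗ[ℝ] En n))).mp hHinj
  obtain ⟨v₁, hv₁⟩ := hHsurj (-(gradx F x0 w0))
  set cc : ℝ := -(inner ℝ (gradx F x0 w0) v₁ : ℝ) with hcc
  have hA1v₁ : hessxx f₀ x0 w0 v₁ + (1:ℝ) • gradx F x0 w0 = 0 := by
    rw [hv₁]; simp
  have hcpos : (0:ℝ) < cc := by
    rcases lt_trichotomy (inner ℝ (gradx F x0 w0) v₁ : ℝ) 0 with hlt | heq | hgt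
    · simpa [hcc] using hlt
    · exact absurd (h1 v₁ 1 hA1v₁ (h2 v₁ 1 hA1v₁ heq)).2 one_ne_zero
    · exact absurd (h1 v₁ 1 hA1v₁ (h3 v₁ 1 hA1v₁ hgt zero_le_one)).2 one_ne_zero
  -- Step 2: the master map and its invertible derivative
  set P := (En n × (En d × ℝ))
  set Lam := LamMap f₀ F with hLamdef
  set p0 : P := (x0, (w0, 0)) with hp0def
  set y0 : P := (0, (w0, 0)) with hy0def
  have hy0 : Lam p0 = y0 := by
    simp only [hLamdef, hp0def, hy0def, LamMap, hstat]
    simp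
  set D := fderiv ℝ Lam p0 with hDdef
  have hD2 : ∀ z : P, (D z).2 = z.2 := fun z => LamMap_fderiv_snd f₀ F hf₀ hF p0 z
  have hDx : ∀ v : En n, (D (v, 0)).1 = hessxx f₀ x0 w0 v :=
    fun v => LamMap_fderiv_x f₀ F x0 w0 hf₀ hF v
  have hDt : (D (0, (0, 1))).1 = gradx F x0 w0 := LamMap_fderiv_t f₀ F x0 w0 hf₀ hF hstat
  have hDker : ∀ z : P, D z = 0 → z = 0 := by
    intro z hz
    have h2z : z.2 = 0 := by rw [← hD2 z, hz]; rfl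
    have hz1 : D (z.1, 0) = 0 := by
      rw [show ((z.1, (0 : En d × ℝ)) : P) = z from Prod.ext rfl h2z.symm, hz]
    have h1z : z.1 = 0 := hHker z.1 (by rw [← hDx z.1, hz1]; rfl)
    exact Prod.ext h1z h2z
  have hDinj : Function.Injective D := by
    intro a b hab
    have := hDker (a - b) (by rw [map_sub, hab, sub_self])
    exact sub_eq_zero.mp this
  have hDbij : Function.Bijective D :=
    ⟨hDinj, (LinearMap.injective_iff_surjective (f := (D : P →ₗ[ℝ] P))).mp hDinj⟩
  set E := LinearEquiv.toContinuousLinearEquiv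
    (LinearEquiv.ofBijective (D : P →ₗ[ℝ] P) hDbij) with hEdef
  have hEcoe : ∀ z : P, E z = D z := fun z => rfl
  have hEeq : (E : P →L[ℝ] P) = D := ContinuousLinearMap.ext fun z => rfl
  have hstrict : HasStrictFDerivAt Lam (E : P →L[ℝ] P) p0 := by
    rw [hEeq]
    exact (contDiff_LamMap f₀ F hf₀ hF).contDiffAt.hasStrictFDerivAt (by norm_num)
  -- the partial homeomorphism given by the inverse function theorem
  set Pl := hstrict.toOpenPartialHomeomorph Lam with hPldef
  have hPlcoe : (Pl : P → P) = Lam := rfl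
  have hp0src : p0 ∈ Pl.source := hstrict.mem_toOpenPartialHomeomorph_source
  have hy0tgt : y0 ∈ Pl.target := by
    rw [← hy0]; exact hstrict.image_mem_toOpenPartialHomeomorph_target
  have hsymm0 : Pl.symm y0 = p0 := by rw [← hy0]; exact Pl.left_inv hp0src
  have hsymmCD : ContDiffAt ℝ 1 Pl.symm y0 := by
    refine Pl.contDiffAt_symm (f₀' := E) hy0tgt ?_ ?_
    · rw [hsymm0]; exact hstrict.hasFDerivAt
    · exact (contDiff_LamMap f₀ F hf₀ hF).contDiffAt
  have hinv : HasStrictFDerivAt Pl.symm ((E.symm : P →L[ℝ] P)) y0 := by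
    have h := hstrict.to_localInverse
    rw [hstrict.localInverse_def] at h
    rw [← hy0]
    exact h
  obtain ⟨f', u, hu, hf'c, hf'd⟩ := contDiffAt_one_iff.mp hsymmCD
  have hf'y0 : f' y0 = (E.symm : P →L[ℝ] P) :=
    (hf'd y0 (mem_of_mem_nhds hu)).unique hinv.hasFDerivAt
  obtain ⟨K₀, tL, htL, hLip⟩ := hsymmCD.exists_lipschitzOnWith
  set K : ℝ := (K₀ : ℝ) with hKdef
  have hK0 : (0:ℝ) ≤ K := K₀.coe_nonneg
  -- value of `E.symm` in the t-direction
  have hEs : E.symm ((0, (0, 1)) : P) = (v₁, (0, 1)) := by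
    have hDv : D ((v₁, (0, 1)) : P) = ((0, (0, 1)) : P) := by
      have hsplit : ((v₁, ((0 : En d), (1:ℝ))) : P)
          = ((v₁, (0 : En d × ℝ)) : P) + ((0, (0, 1)) : P) := by
        simp [Prod.ext_iff]
      refine Prod.ext ?_ ?_
      · rw [hsplit, map_add]
        have : (D (v₁, (0 : En d × ℝ)) + D ((0,(0,1)) : P)).1
            = (D (v₁, (0 : En d × ℝ))).1 + (D ((0,(0,1)) : P)).1 := rfl
        rw [this, hDx v₁, hDt, hv₁]
        simp
      · rw [hD2]
    calc E.symm ((0, (0, 1)) : P) = E.symm (E (v₁, (0,1))) := by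
          rw [show E ((v₁, (0,1)) : P) = ((0, (0, 1)) : P) from (hEcoe _).trans hDv]
      _ = (v₁, (0,1)) := E.symm_apply_apply _
  -- Step 3: the local parametrization `ξ(w,t)` and the function `ρ(w,t) = F(ξ(w,t),w)`
  set Z : En d × ℝ → P := fun q => Pl.symm (0, q) with hZdef
  set ξ : En d × ℝ → En n := fun q => (Z q).1 with hξdef
  set ρ : En d × ℝ → ℝ := fun q => F (ξ q, q.1) with hρdef
  have hZy0 : Z (w0, 0) = p0 := hsymm0
  have hξ0 : ξ (w0, 0) = x0 := by show (Z (w0, 0)).1 = x0; rw [hZy0]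
  have hZright : ∀ q : En d × ℝ, ((0 : En n), q) ∈ Pl.target → Lam (Z q) = ((0 : En n), q) :=
    fun q hq => Pl.right_inv hq
  have hZ2 : ∀ q : En d × ℝ, ((0 : En n), q) ∈ Pl.target → (Z q).2 = q := by
    intro q hq
    have h := congrArg Prod.snd (hZright q hq)
    simpa [hLamdef, LamMap] using h
  have hstatq : ∀ q : En d × ℝ, ((0 : En n), q) ∈ Pl.target →
      gradx f₀ (ξ q) q.1 + q.2 • gradx F (ξ q) q.1 = 0 := by
    intro q hq
    have h := congrArg Prod.fst (hZright q hq)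
    simp only [hLamdef, LamMap] at h
    rw [hZ2 q hq] at h
    exact h
  -- the derivative of `t ↦ ρ(w,t)`
  have hρderiv : ∀ (w : En d) (t : ℝ), ((0 : En n), (w, t)) ∈ u →
      HasDerivAt (fun s => ρ (w, s))
        ((inner ℝ (gradx F (ξ (w, t)) w) ((f' (0, (w, t)) ((0, (0, 1)) : P)).1) : ℝ)) t := by
    intro w t hmem
    have hcurve : HasDerivAt (fun s : ℝ => (((0 : En n), (w, s)) : P)) ((0, (0, 1)) : P) t :=
      (hasDerivAt_const _ _).prodMk ((hasDerivAt_const _ _).prodMk (hasDerivAt_id t))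
    have hZd : HasDerivAt (fun s : ℝ => Pl.symm (0, (w, s)))
        (f' (0, (w, t)) ((0, (0, 1)) : P)) t :=
      (hf'd _ hmem).comp_hasDerivAt t hcurve
    have hξd : HasDerivAt (fun s : ℝ => ξ (w, s)) ((f' (0, (w, t)) ((0, (0, 1)) : P)).1) t :=
      ((ContinuousLinearMap.fst ℝ (En n) (En d × ℝ)).hasFDerivAt).comp_hasDerivAt t hZd
    have hFdiff : DifferentiableAt ℝ (fun y : En n => F (y, w)) (ξ (w, t)) := by
      have hd : DifferentiableAt ℝ F ((ξ (w, t)), w) :=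
        (hF.differentiable (by norm_num)).differentiableAt
      exact DifferentiableAt.comp (ξ (w, t)) hd
        ((differentiableAt_id.prodMk (differentiableAt_const w)) :
          DifferentiableAt ℝ (fun y : En n => (y, w)) (ξ (w, t)))
    have hFd := hFdiff.hasGradientAt.hasFDerivAt
    have hcomp := hFd.comp_hasDerivAt t hξd
    simpa [hρdef, gradx, InnerProductSpace.toDual_apply_apply, Function.comp_def] using hcomp
  -- value of this derivative at the base point
  have hQ0 : (inner ℝ (gradx F (ξ (w0, 0)) w0) ((f' (0, (w0, 0)) ((0, (0, 1)) : P)).1) : ℝ)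
      = -cc := by
    have he : f' ((0 : En n), (w0, (0:ℝ))) = (E.symm : P →L[ℝ] P) := hf'y0
    have hv : ((f' ((0 : En n), (w0, (0:ℝ))) ((0, (0, 1)) : P)).1) = v₁ := by
      rw [he]
      have : (E.symm : P →L[ℝ] P) ((0, (0, 1)) : P) = E.symm ((0, (0, 1)) : P) := rfl
      rw [this, hEs]
    rw [hξ0, hv, hcc]
    simp
  -- Step 4: neighborhoods and constants
  have hjAt : ContinuousAt (fun q : En d × ℝ => (((0 : En n), q) : P)) (w0, 0) :=
    (continuous_const.prodMk continuous_id).continuousAt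
  have hZc : ContinuousAt Z (w0, 0) := hsymmCD.continuousAt.comp hjAt
  have hξc : ContinuousAt ξ (w0, 0) := (continuous_fst.continuousAt).comp hZc
  have hQc : ContinuousAt (fun q : En d × ℝ =>
      (inner ℝ (gradx F (ξ q) q.1) ((f' ((0 : En n), q) ((0, (0, 1)) : P)).1) : ℝ)) (w0, 0) := by
    have hgF' : ContinuousAt (fun q : En d × ℝ => gradx F (ξ q) q.1) (w0, 0) :=
      ((contDiff_gradx F hF).continuous.continuousAt).comp
        (hξc.prodMk continuous_fst.continuousAt)
    have hf'At : ContinuousAt f' y0 := hf'c.continuousAt hu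
    have happly : Continuous (fun T : P →L[ℝ] P => ((T ((0, (0, 1)) : P)).1)) :=
      continuous_fst.comp (ContinuousLinearMap.apply ℝ P ((0, (0, 1)) : P)).continuous
    have h2c : ContinuousAt (fun q : En d × ℝ =>
        ((f' ((0 : En n), q) ((0, (0, 1)) : P)).1)) (w0, 0) :=
      happly.continuousAt.comp (hf'At.comp hjAt)
    exact hgF'.inner h2c
  have hQlt : ∀ᶠ q : En d × ℝ in nhds (w0, 0),
      (inner ℝ (gradx F (ξ q) q.1) ((f' ((0 : En n), q) ((0, (0, 1)) : P)).1) : ℝ) < -cc/2 := by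
    apply hQc.eventually_lt continuousAt_const
    rw [hQ0]
    linarith
  have hmem_ev : ∀ᶠ q : En d × ℝ in nhds (w0, 0), (((0 : En n), q) : P) ∈ u :=
    hjAt.preimage_mem_nhds hu
  obtain ⟨ε₁, hε₁pos, hε₁⟩ := Metric.eventually_nhds_iff_ball.mp (hQlt.and hmem_ev)
  obtain ⟨ε₃, hε₃pos, hε₃⟩ := Metric.mem_nhds_iff.mp
    (Filter.inter_mem (Filter.inter_mem htL (Pl.open_target.mem_nhds hy0tgt)) hu)
  obtain ⟨ε₄, hε₄pos, hε₄⟩ := Metric.mem_nhds_iff.mp (Pl.open_source.mem_nhds hp0src)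
  obtain ⟨KF₀, tF, htF, hFLip⟩ :=
    ((hF.of_le (show (1 : WithTop ℕ∞) ≤ 2 by norm_num)).contDiffAt
      (x := ((x0, w0) : En n × En d))).exists_lipschitzOnWith
  obtain ⟨ε₅, hε₅pos, hε₅⟩ := Metric.mem_nhds_iff.mp htF
  set KF : ℝ := (KF₀ : ℝ) with hKFdef
  have hKF0 : (0:ℝ) ≤ KF := KF₀.coe_nonneg
  set ω : ℝ := min (min (ε₁/2) (ε₃/4)) (min (min (ε₄/2) (ε₅/(2*(K+1)))) (min (ε₅/2) 1))
    with hωdef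
  have hωpos : 0 < ω := by
    have hK1 : (0:ℝ) < K + 1 := by linarith
    refine lt_min (lt_min (by linarith) (by linarith)) (lt_min (lt_min (by linarith) ?_)
      (lt_min (by linarith) one_pos))
    positivity
  have hωε₁ : ω ≤ ε₁/2 := le_trans (min_le_left _ _) (min_le_left _ _)
  have hωε₃ : ω ≤ ε₃/4 := le_trans (min_le_left _ _) (min_le_right _ _)
  have hωε₄ : ω ≤ ε₄/2 := le_trans (min_le_right _ _) (le_trans (min_le_left _ _) (min_le_left _ _))
  have hωε₅K : ω ≤ ε₅/(2*(K+1)) :=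
    le_trans (min_le_right _ _) (le_trans (min_le_left _ _) (min_le_right _ _))
  have hωε₅ : ω ≤ ε₅/2 := le_trans (min_le_right _ _) (le_trans (min_le_right _ _) (min_le_left _ _))
  have hKω : K * ω ≤ ε₅/2 := by
    have hK1 : (0:ℝ) < K + 1 := by linarith
    have h0 : K * ω ≤ (K+1) * ω := mul_le_mul_of_nonneg_right (by linarith) hωpos.le
    have h1 : (K+1) * ω ≤ (K+1) * (ε₅/(2*(K+1))) :=
      mul_le_mul_of_nonneg_left hωε₅K (by linarith)
    have h2 : (K+1) * (ε₅/(2*(K+1))) = ε₅/2 := by field_simp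
    linarith
  -- `ρ(w,0)` is small for `w` near `w0`
  have hρ0c : ContinuousAt (fun w : En d => ρ (w, 0)) w0 := by
    have hρc : ContinuousAt ρ (w0, 0) :=
      (hF.continuous.continuousAt).comp (hξc.prodMk continuous_fst.continuousAt)
    exact ContinuousAt.comp (g := ρ) (f := fun w : En d => ((w, (0:ℝ)) : En d × ℝ)) (x := w0) hρc
      (((continuous_id.prodMk continuous_const).continuousAt :
        ContinuousAt (fun w : En d => ((w, (0:ℝ)) : En d × ℝ)) w0))
  have hρ00 : ρ (w0, 0) = 0 := by
    have : ρ (w0, 0) = F (ξ (w0, 0), w0) := rfl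
    rw [this, hξ0]; exact hFeq
  have hη₂ev : ∀ᶠ w : En d in nhds w0, |ρ (w, 0)| < cc * ω / 4 := by
    apply (hρ0c.abs).eventually_lt continuousAt_const
    have : |ρ (w0, 0)| = 0 := by rw [hρ00]; simp
    rw [this]; positivity
  obtain ⟨η₂, hη₂pos, hη₂⟩ := Metric.eventually_nhds_iff_ball.mp hη₂ev
  -- `‖∇ₓf₀‖` small and `‖∇ₓF‖` bounded below near `(x0,w0)`
  have hg₁ev : ∀ᶠ p : En n × En d in nhds (x0, w0),
      ‖gradx f₀ p.1 p.2‖ < ‖gradx F x0 w0‖ * ω / 8 := by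
    apply (((contDiff_gradx f₀ hf₀).continuous.norm).continuousAt).eventually_lt
      continuousAt_const
    have : ‖gradx f₀ (x0, w0).1 (x0, w0).2‖ = 0 := by simp [hstat]
    rw [this]; positivity
  have hg₂ev : ∀ᶠ p : En n × En d in nhds (x0, w0),
      ‖gradx F x0 w0‖/2 < ‖gradx F p.1 p.2‖ := by
    apply continuousAt_const.eventually_lt
      (((contDiff_gradx F hF).continuous.norm).continuousAt)
    show ‖gradx F x0 w0‖/2 < ‖gradx F (x0, w0).1 (x0, w0).2‖
    simp only []
    linarith
  obtain ⟨η₃, hη₃pos, hη₃⟩ := Metric.eventually_nhds_iff_ball.mp (hg₁ev.and hg₂ev)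
  -- final constants
  set γ : ℝ := min (‖gradx F x0 w0‖ * ω / 16) (ε₃/4) with hγdef
  have hγpos : 0 < γ := lt_min (by positivity) (by positivity)
  set υU : ℝ := min ω (min η₃ ε₅) with hυUdef
  set υV : ℝ := min (min ω η₂) (min η₃ ε₅) with hυVdef
  have hυUpos : 0 < υU := lt_min hωpos (lt_min hη₃pos hε₅pos)
  have hυVpos : 0 < υV := lt_min (lt_min hωpos hη₂pos) (lt_min hη₃pos hε₅pos)
  set r₀ : ℝ := K + 2*K^2*KF/cc with hr₀def
  have hr₀0 : 0 ≤ r₀ := by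
    have : (0:ℝ) ≤ 2*K^2*KF/cc := div_nonneg (by positivity) hcpos.le
    simp only [hr₀def]; linarith
  refine ⟨r₀ + 1, by linarith, γ, hγpos, ball x0 υU, ball_mem_nhds _ hυUpos,
    ball w0 υV, ball_mem_nhds _ hυVpos, ?_⟩
  intro x hx w hw hne hδγ
  -- Step 5: the estimate at a given point (x,w)
  set δ := Metric.infDist 0 (PhiGen f₀ F x w) with hδdef
  have hδ0 : 0 ≤ δ := Metric.infDist_nonneg
  obtain ⟨z₀, hz₀Φ⟩ := hne
  have hFle : F (x, w) ≤ 0 := hz₀Φ.1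
  have hxx0 : dist x x0 < υU := mem_ball.mp hx
  have hww0 : dist w w0 < υV := mem_ball.mp hw
  have hxω : dist x x0 < ω := lt_of_lt_of_le hxx0 (min_le_left _ _)
  have hwω : dist w w0 < ω :=
    lt_of_lt_of_le hww0 (le_trans (min_le_left _ _) (min_le_left _ _))
  have hwη₂ : dist w w0 < η₂ :=
    lt_of_lt_of_le hww0 (le_trans (min_le_left _ _) (min_le_right _ _))
  have hxη₃ : dist x x0 < η₃ :=
    lt_of_lt_of_le hxx0 (le_trans (min_le_right _ _) (min_le_left _ _))
  have hwη₃ : dist w w0 < η₃ :=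
    lt_of_lt_of_le hww0 (le_trans (min_le_right _ _) (min_le_left _ _))
  have hxε₅ : dist x x0 < ε₅ :=
    lt_of_lt_of_le hxx0 (le_trans (min_le_right _ _) (min_le_right _ _))
  have hwε₅ : dist w w0 < ε₅ :=
    lt_of_lt_of_le hww0 (le_trans (min_le_right _ _) (min_le_right _ _))
  have hxwη₃ : ((x, w) : En n × En d) ∈ ball ((x0, w0) : En n × En d) η₃ := by
    rw [mem_ball, Prod.dist_eq]; exact max_lt hxη₃ hwη₃
  obtain ⟨hGsmall, hFxbig⟩ := hη₃ _ hxwη₃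
  have hGsmall' : ‖gradx f₀ x w‖ < ‖gradx F x0 w0‖ * ω / 8 := hGsmall
  have hFxbig' : ‖gradx F x0 w0‖/2 < ‖gradx F x w‖ := hFxbig
  -- points (0,(w,t)) are in the good sets
  have hQball : ∀ t : ℝ, |t| ≤ ω →
      (inner ℝ (gradx F (ξ (w, t)) w) ((f' ((0:En n), (w,t)) ((0,(0,1)):P)).1) : ℝ) < -cc/2
      ∧ (((0:En n),(w,t)) : P) ∈ u := by
    intro t ht
    apply hε₁
    rw [mem_ball, Prod.dist_eq]
    refine max_lt (by linarith) ?_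
    rw [Real.dist_eq, sub_zero]
    linarith [ht]
  have hballε₃ : ∀ t : ℝ, |t| ≤ ω → (((0:En n),(w,t)) : P) ∈ tL ∩ Pl.target ∩ u := by
    intro t ht
    apply hε₃
    rw [mem_ball]
    have hd : dist ((((0:En n),(w,t))) : P) y0
        = max (dist (0:En n) 0) (max (dist w w0) (dist t 0)) := by
      rw [hy0def, Prod.dist_eq, Prod.dist_eq]
    rw [hd, Real.dist_eq, sub_zero, dist_self]
    have h1 : |t| < ε₃ := by linarith
    have h2 : dist w w0 < ε₃ := by linarith
    refine max_lt (by linarith) (max_lt h2 h1)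
  have hρd : ∀ t : ℝ, |t| ≤ ω → HasDerivAt (fun s => ρ (w, s))
      ((inner ℝ (gradx F (ξ (w, t)) w) ((f' ((0:En n), (w,t)) ((0,(0,1)):P)).1) : ℝ)) t :=
    fun t ht => hρderiv w t (hQball t ht).2
  -- slope estimate
  have hslope : ∀ t t' : ℝ, |t| ≤ ω → |t'| ≤ ω → t ≤ t' →
      cc/2 * (t' - t) ≤ ρ (w, t) - ρ (w, t') := by
    intro t t' ht ht' htt'
    set ψ : ℝ → ℝ := fun s => ρ (w, s) + cc/2 * s with hψdef
    have hψd : ∀ s : ℝ, s ∈ Icc (-ω) ω → HasDerivAt ψ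
        ((inner ℝ (gradx F (ξ (w, s)) w) ((f' ((0:En n), (w,s)) ((0,(0,1)):P)).1) : ℝ)
          + cc/2) s := by
      intro s hs
      have habs : |s| ≤ ω := abs_le.mpr ⟨hs.1, hs.2⟩
      have h2 : HasDerivAt (fun s : ℝ => cc/2 * s) (cc/2) s := by
        simpa using (hasDerivAt_id s).const_mul (cc/2)
      exact (hρd s habs).add h2
    have hanti : AntitoneOn ψ (Icc (-ω) ω) := by
      apply antitoneOn_of_deriv_nonpos (convex_Icc _ _)
      · intro s hs
        exact ((hψd s hs).continuousAt).continuousWithinAt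
      · intro s hs
        rw [interior_Icc] at hs
        exact ((hψd s ⟨hs.1.le, hs.2.le⟩).differentiableAt).differentiableWithinAt
      · intro s hs
        rw [interior_Icc] at hs
        rw [(hψd s ⟨hs.1.le, hs.2.le⟩).deriv]
        have := (hQball s (abs_le.mpr ⟨hs.1.le, hs.2.le⟩)).1
        linarith
    have h := hanti ⟨(abs_le.mp ht).1, (abs_le.mp ht).2⟩
      ⟨(abs_le.mp ht').1, (abs_le.mp ht').2⟩ htt'
    simp only [hψdef] at h
    linarith
  -- existence of a zero `μ̂` of `t ↦ ρ(w,t)`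
  have hρ0small : |ρ (w, 0)| < cc * ω / 4 := hη₂ w (mem_ball.mpr hwη₂)
  have hω0 : |(0:ℝ)| ≤ ω := by simpa using hωpos.le
  have hωω : |ω| ≤ ω := by rw [abs_of_nonneg hωpos.le]
  have hωω' : |(-ω)| ≤ ω := by rw [abs_neg, abs_of_nonneg hωpos.le]
  have hρplus : ρ (w, ω) ≤ 0 := by
    have h1 := hslope 0 ω hω0 hωω hωpos.le
    have h2 := abs_lt.mp hρ0small
    have h3 : cc/2 * (ω - 0) = cc * ω / 2 := by ring
    rw [h3] at h1
    linarith [h1, h2.2]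
  have hρminus : 0 ≤ ρ (w, -ω) := by
    have h1 := hslope (-ω) 0 hωω' hω0 (by linarith)
    have h2 := abs_lt.mp hρ0small
    have h3 : cc/2 * (0 - -ω) = cc * ω / 2 := by ring
    rw [h3] at h1
    linarith [h1, h2.1]
  obtain ⟨μh, hμhmem, hμh0⟩ : ∃ t ∈ Icc (-ω) ω, ρ (w, t) = 0 := by
    have hcont : ContinuousOn (fun t => ρ (w, t)) (Icc (-ω) ω) := fun s hs =>
      ((hρd s (abs_le.mpr ⟨hs.1, hs.2⟩)).continuousAt).continuousWithinAt
    have h := intermediate_value_Icc' (by linarith : -ω ≤ ω) hcont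
    obtain ⟨t, ht, ht0⟩ := h ⟨hρplus, hρminus⟩
    exact ⟨t, ht, ht0⟩
  have hμhab : |μh| ≤ ω := abs_le.mpr ⟨hμhmem.1, hμhmem.2⟩
  -- candidate stationary points
  have hmemS : ∀ t : ℝ, 0 ≤ t → |t| ≤ ω → F (ξ (w,t), w) ≤ 0 →
      t * F (ξ (w,t), w) = 0 → ξ (w,t) ∈ Sgen f₀ F w := by
    intro t ht0 htω hFle' hFmul
    exact ⟨hFle', t, ht0, hstatq (w,t) (hballε₃ t htω).1.2, hFmul⟩
  -- `F(·,w)` is Lipschitz near x0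
  have hFlip' : ∀ a b : En n, dist a x0 < ε₅ → dist b x0 < ε₅ →
      |F (a, w) - F (b, w)| ≤ KF * dist a b := by
    intro a b ha hb
    have hmema : ((a, w) : En n × En d) ∈ tF := hε₅ (by rw [mem_ball, Prod.dist_eq]; exact max_lt ha hwε₅)
    have hmemb : ((b, w) : En n × En d) ∈ tF := hε₅ (by rw [mem_ball, Prod.dist_eq]; exact max_lt hb hwε₅)
    have h1 := hFLip.dist_le_mul _ hmema _ hmemb
    rw [Real.dist_eq] at h1
    have h2 : dist ((a, w) : En n × En d) ((b, w) : En n × En d) = dist a b := by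
      rw [Prod.dist_eq, dist_self]
      exact max_eq_left dist_nonneg
    rw [h2] at h1
    exact h1
  -- ξ(w,t) stays ε₅-close to x0
  have hy0tL : y0 ∈ tL := mem_of_mem_nhds htL
  have hξx0 : ∀ t : ℝ, |t| ≤ ω → dist (ξ (w,t)) x0 < ε₅ := by
    intro t ht
    have h1 := hLip.dist_le_mul (((0:En n),(w,t)):P) (hballε₃ t ht).1.1 y0 hy0tL
    rw [hsymm0] at h1
    have h2 : dist ((((0:En n),(w,t))) : P) y0 ≤ ω := by
      have hd : dist ((((0:En n),(w,t))) : P) y0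
          = max (dist (0:En n) 0) (max (dist w w0) (dist t 0)) := by
        rw [hy0def, Prod.dist_eq, Prod.dist_eq]
      rw [hd, Real.dist_eq, sub_zero, dist_self]
      exact max_le hωpos.le (max_le hwω.le ht)
    have h3 : dist (ξ (w,t)) x0 ≤ dist (Z (w,t)) p0 := by
      rw [Prod.dist_eq]
      exact le_max_left _ _
    have h4 : (K:ℝ) * dist ((((0:En n),(w,t))) : P) y0 ≤ K * ω :=
      mul_le_mul_of_nonneg_left h2 hK0
    have hK1 : (0:ℝ) < K + 1 := by linarith
    calc dist (ξ (w,t)) x0 ≤ dist (Z (w,t)) p0 := h3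
      _ ≤ K * dist ((((0:En n),(w,t))) : P) y0 := h1
      _ ≤ K * ω := h4
      _ ≤ ε₅/2 := hKω
      _ < ε₅ := by linarith
  -- Lipschitz of ξ in t
  have hξLip : ∀ t t' : ℝ, |t| ≤ ω → |t'| ≤ ω →
      dist (ξ (w,t)) (ξ (w,t')) ≤ K * |t - t'| := by
    intro t t' ht ht'
    have h1 := hLip.dist_le_mul (((0:En n),(w,t)):P) (hballε₃ t ht).1.1
      (((0:En n),(w,t')):P) (hballε₃ t' ht').1.1
    have h2 : dist ((((0:En n),(w,t))) : P) ((((0:En n),(w,t'))) : P) = |t - t'| := by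
      rw [Prod.dist_eq, Prod.dist_eq, dist_self, dist_self, Real.dist_eq]
      rw [max_eq_right (le_max_of_le_right (abs_nonneg _)), max_eq_right (abs_nonneg _)]
    rw [h2] at h1
    have h3 : dist (ξ (w,t)) (ξ (w,t')) ≤ dist (Z (w,t)) (Z (w,t')) := by
      rw [Prod.dist_eq]
      exact le_max_left _ _
    exact le_trans h3 h1
  -- Step 6: the key per-ε estimate
  have key : ∀ ε : ℝ, 0 < ε → ε ≤ γ →
      Metric.infDist x (Sgen f₀ F w) ≤ r₀ * (δ + ε) := by
    intro ε hεpos hεγ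
    obtain ⟨z₀', hz₀'Φ, hz₀'d⟩ := (Metric.infDist_lt_iff ⟨z₀, hz₀Φ⟩).mp
      (show δ < δ + ε by linarith)
    obtain ⟨-, μ₀, hμ₀0, hμ₀F, hz₀'eq⟩ := hz₀'Φ
    rw [hz₀'eq, dist_zero_left] at hz₀'d
    set B := ‖gradx f₀ x w + μ₀ • gradx F x w‖ with hBdef
    have hB0 : 0 ≤ B := norm_nonneg _
    have hδεγ : δ + ε ≤ 2*γ := by linarith
    have hγω : γ ≤ ‖gradx F x0 w0‖ * ω / 16 := min_le_left _ _
    have hγε₃ : γ ≤ ε₃/4 := min_le_right _ _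
    have hμ₀ω : μ₀ ≤ ω/2 := by
      have ha : μ₀ * ‖gradx F x w‖ = ‖μ₀ • gradx F x w‖ := by
        rw [norm_smul, Real.norm_eq_abs, abs_of_nonneg hμ₀0]
      have hb2 : ‖μ₀ • gradx F x w‖ ≤ B + ‖gradx f₀ x w‖ := by
        have h3 : μ₀ • gradx F x w
            = (gradx f₀ x w + μ₀ • gradx F x w) - gradx f₀ x w := by abel
        rw [h3]
        exact norm_sub_le _ _
      have h4 : μ₀ * ‖gradx F x w‖ < ‖gradx F x0 w0‖ * ω / 4 := by
        rw [ha]; linarith [hz₀'d, hGsmall', hδεγ, hγω]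
      have hbb : (0:ℝ) < ‖gradx F x0 w0‖/2 := by linarith
      have hA : μ₀ * (‖gradx F x0 w0‖/2) ≤ μ₀ * ‖gradx F x w‖ :=
        mul_le_mul_of_nonneg_left hFxbig'.le hμ₀0
      have hB2 : μ₀ * (‖gradx F x0 w0‖/2) < (ω/2) * (‖gradx F x0 w0‖/2) := by
        have hEq : (ω/2) * (‖gradx F x0 w0‖/2) = ‖gradx F x0 w0‖ * ω / 4 := by ring
        linarith
      exact le_of_lt (lt_of_mul_lt_mul_right hB2 hbb.le)
    have hμ₀ab : |μ₀| ≤ ω := by rw [abs_of_nonneg hμ₀0]; linarith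
    have hzsrc : ((x, (w, μ₀)) : P) ∈ Pl.source := by
      apply hε₄
      rw [mem_ball]
      have hd : dist (((x, (w, μ₀))) : P) p0
          = max (dist x x0) (max (dist w w0) (dist μ₀ 0)) := by
        rw [hp0def, Prod.dist_eq, Prod.dist_eq]
      rw [hd, Real.dist_eq, sub_zero, abs_of_nonneg hμ₀0]
      refine max_lt (by linarith) (max_lt (by linarith) (by linarith))
    have hLamzB : dist (Lam ((x, (w, μ₀)) : P)) (((0:En n), (w, μ₀)) : P) = B := by
      have hLz : Lam ((x, (w, μ₀)) : P)
          = ((gradx f₀ x w + μ₀ • gradx F x w, (w, μ₀)) : P) := rfl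
      rw [hLz, Prod.dist_eq, dist_self, dist_zero_right]
      exact max_eq_left hB0
    have hLamztL : Lam ((x, (w, μ₀)) : P) ∈ tL := by
      refine (hε₃ ?_).1.1
      rw [mem_ball]
      have hd : dist (Lam ((x, (w, μ₀)) : P)) y0
          = max ‖gradx f₀ x w + μ₀ • gradx F x w‖ (max (dist w w0) (dist μ₀ 0)) := by
        have hLz : Lam ((x, (w, μ₀)) : P)
            = ((gradx f₀ x w + μ₀ • gradx F x w, (w, μ₀)) : P) := rfl
        rw [hLz, hy0def, Prod.dist_eq, Prod.dist_eq, dist_zero_right]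
      rw [hd, Real.dist_eq, sub_zero, abs_of_nonneg hμ₀0]
      have hBε₃ : ‖gradx f₀ x w + μ₀ • gradx F x w‖ < ε₃ := by
        have : B < ε₃ := by linarith
        exact this
      refine max_lt hBε₃ (max_lt (by linarith) (by linarith))
    have hxm : dist x (ξ (w, μ₀)) ≤ K * B := by
      have ha := hLip.dist_le_mul (Lam ((x, (w, μ₀)) : P)) hLamztL
        (((0:En n), (w, μ₀)) : P) (hballε₃ μ₀ hμ₀ab).1.1
      rw [hLamzB] at ha
      have h2 : Pl.symm (Lam ((x, (w, μ₀)) : P)) = ((x, (w, μ₀)) : P) := Pl.left_inv hzsrc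
      rw [h2] at ha
      have h3 : dist x (ξ (w, μ₀)) ≤ dist (((x, (w, μ₀))) : P) (Z (w, μ₀)) := by
        rw [Prod.dist_eq]
        exact le_max_left _ _
      exact le_trans h3 ha
    have hρbound0 : F (x, w) = 0 → |ρ (w, μ₀)| ≤ KF * (K * B) := by
      intro hF0
      have ha := hFlip' (ξ (w, μ₀)) x (hξx0 μ₀ hμ₀ab) hxε₅
      rw [hF0, sub_zero] at ha
      have h2 : |ρ (w, μ₀)| = |F (ξ (w, μ₀), w)| := rfl
      rw [h2]
      calc |F (ξ (w, μ₀), w)| ≤ KF * dist (ξ (w, μ₀)) x := ha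
        _ ≤ KF * (K * B) := by
          have h7 := hxm
          rw [dist_comm] at h7
          exact mul_le_mul_of_nonneg_left h7 hKF0
    have hBδε : B ≤ δ + ε := hz₀'d.le
    have hRHSnn : 0 ≤ 2/cc * (KF * (K * B)) :=
      mul_nonneg (div_nonneg (by norm_num) hcpos.le)
        (mul_nonneg hKF0 (mul_nonneg hK0 hB0))
    have hfinal : ∀ t : ℝ, 0 ≤ t → |t| ≤ ω → ξ (w, t) ∈ Sgen f₀ F w →
        |μ₀ - t| ≤ 2/cc * (KF * (K * B)) →
        Metric.infDist x (Sgen f₀ F w) ≤ r₀ * (δ + ε) := by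
      intro t ht0 htω htS hdiff
      have h1' : dist x (ξ (w, t)) ≤ K * B + K * (2/cc * (KF * (K * B))) := by
        have h2 := hξLip μ₀ t hμ₀ab htω
        have h3 : K * |μ₀ - t| ≤ K * (2/cc * (KF * (K * B))) :=
          mul_le_mul_of_nonneg_left hdiff hK0
        calc dist x (ξ (w, t)) ≤ dist x (ξ (w, μ₀)) + dist (ξ (w, μ₀)) (ξ (w, t)) :=
            dist_triangle _ _ _
          _ ≤ K * B + K * |μ₀ - t| := add_le_add hxm h2
          _ ≤ K * B + K * (2/cc * (KF * (K * B))) := by linarith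
      have hEqn : K * B + K * (2/cc * (KF * (K * B))) = r₀ * B := by
        rw [hr₀def]; ring
      calc Metric.infDist x (Sgen f₀ F w) ≤ dist x (ξ (w, t)) :=
          Metric.infDist_le_dist_of_mem htS
        _ ≤ K * B + K * (2/cc * (KF * (K * B))) := h1'
        _ = r₀ * B := hEqn
        _ ≤ r₀ * (δ + ε) := mul_le_mul_of_nonneg_left hBδε hr₀0
    rcases le_or_gt 0 μh with hμhpos | hμhneg
    · -- μ̂ ≥ 0 : use x̂ = ξ(w,μ̂)
      have hFxh : F (ξ (w, μh), w) = 0 := hμh0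
      have hxhS : ξ (w, μh) ∈ Sgen f₀ F w :=
        hmemS μh hμhpos hμhab (le_of_eq hFxh) (by rw [hFxh, mul_zero])
      have hρμ₀ : |ρ (w, μ₀)| ≤ KF * (K * B) := by
        rcases eq_or_lt_of_le hFle with hF0 | hFneg
        · exact hρbound0 hF0
        · have hμ₀eq : μ₀ = 0 := by
            rcases mul_eq_zero.mp hμ₀F with h | h
            · exact h
            · exact absurd h (ne_of_lt hFneg)
          have h2 : 0 ≤ ρ (w, 0) := by
            have h3 := hslope 0 μh hω0 hμhab hμhpos
            rw [hμh0] at h3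
            have h8 : 0 ≤ cc * μh := mul_nonneg hcpos.le hμhpos
            clear_value cc
            linarith
          have ha := hFlip' (ξ (w, 0)) x (hξx0 0 hω0) hxε₅
          have h4 : ρ (w, 0) ≤ KF * dist (ξ (w, 0)) x := by
            have h5 : F (ξ (w, 0), w) - F (x, w) ≤ |F (ξ (w, 0), w) - F (x, w)| :=
              le_abs_self _
            have h6 : ρ (w, 0) = F (ξ (w, 0), w) := rfl
            linarith [hFneg.le]
          rw [hμ₀eq, abs_of_nonneg h2]
          calc ρ (w, 0) ≤ KF * dist (ξ (w, 0)) x := h4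
            _ ≤ KF * (K * B) := by
              have h7 := hxm
              rw [hμ₀eq] at h7
              rw [dist_comm] at h7
              exact mul_le_mul_of_nonneg_left h7 hKF0
      have hμdiff : |μ₀ - μh| ≤ 2/cc * (KF * (K * B)) := by
        rcases le_total μ₀ μh with hle | hle
        · have h3 := hslope μ₀ μh hμ₀ab hμhab hle
          rw [hμh0] at h3
          have h4 : ρ (w, μ₀) ≤ KF * (K * B) := le_trans (le_abs_self _) hρμ₀
          rw [abs_of_nonpos (by linarith)]
          have h5 : μh - μ₀ ≤ 2/cc * (KF * (K * B)) := by
            rw [div_mul_eq_mul_div, le_div_iff₀ hcpos]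
            clear_value cc K KF B
            linarith
          linarith
        · have h3 := hslope μh μ₀ hμhab hμ₀ab hle
          rw [hμh0] at h3
          have h4 : -ρ (w, μ₀) ≤ KF * (K * B) := le_trans (neg_le_abs _) hρμ₀
          rw [abs_of_nonneg (by linarith)]
          rw [div_mul_eq_mul_div, le_div_iff₀ hcpos]
          clear_value cc K KF B
          linarith
      exact hfinal μh hμhpos hμhab hxhS hμdiff
    · -- μ̂ < 0 : use x* = ξ(w,0)
      have hρ0neg : F (ξ (w, 0), w) ≤ 0 := by
        have h3 := hslope μh 0 hμhab hω0 hμhneg.le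
        rw [hμh0] at h3
        have h5 : 0 ≤ cc/2 * (0 - μh) := by
          apply mul_nonneg (by linarith)
          linarith
        have h6 : ρ (w, 0) = F (ξ (w, 0), w) := rfl
        linarith
      have hxS : ξ (w, 0) ∈ Sgen f₀ F w :=
        hmemS 0 le_rfl hω0 hρ0neg (by rw [zero_mul])
      have hμdiff : |μ₀ - 0| ≤ 2/cc * (KF * (K * B)) := by
        rw [sub_zero, abs_of_nonneg hμ₀0]
        rcases eq_or_lt_of_le hFle with hF0 | hFneg
        · have h3 := hslope μh μ₀ hμhab hμ₀ab (by linarith)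
          rw [hμh0] at h3
          have h4 : -ρ (w, μ₀) ≤ KF * (K * B) := le_trans (neg_le_abs _) (hρbound0 hF0)
          rw [div_mul_eq_mul_div, le_div_iff₀ hcpos]
          have h7 : 0 ≤ cc * (-μh) := by
            apply mul_nonneg hcpos.le
            linarith
          clear_value cc K KF B
          linarith
        · have hμ₀eq : μ₀ = 0 := by
            rcases mul_eq_zero.mp hμ₀F with h | h
            · exact h
            · exact absurd h (ne_of_lt hFneg)
          rw [hμ₀eq]
          exact hRHSnn
      exact hfinal 0 le_rfl hω0 hxS hμdiff
  -- Step 7: conclude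
  have hmain : Metric.infDist x (Sgen f₀ F w) ≤ r₀ * δ := by
    apply le_of_forall_pos_le_add
    intro θ hθ
    have hεp : 0 < min γ (θ/(r₀+1)) := lt_min hγpos (div_pos hθ (by linarith))
    have h := key _ hεp (min_le_left _ _)
    have h3 : min γ (θ/(r₀+1)) ≤ θ/(r₀+1) := min_le_right _ _
    have h4 : r₀ * min γ (θ/(r₀+1)) ≤ r₀ * (θ/(r₀+1)) :=
      mul_le_mul_of_nonneg_left h3 hr₀0
    have h5 : r₀ * (θ/(r₀+1)) ≤ θ := by
      rw [mul_comm, div_mul_eq_mul_div, div_le_iff₀ (by linarith : (0:ℝ) < r₀+1)]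
      have h8 := mul_le_mul_of_nonneg_left (show r₀ ≤ r₀ + 1 by linarith) hθ.le
      linarith
    have h6 : r₀ * (δ + min γ (θ/(r₀+1))) = r₀*δ + r₀*(min γ (θ/(r₀+1))) := by ring
    calc Metric.infDist x (Sgen f₀ F w) ≤ r₀ * (δ + min γ (θ/(r₀+1))) := h
      _ = r₀*δ + r₀*(min γ (θ/(r₀+1))) := h6
      _ ≤ r₀*δ + r₀*(θ/(r₀+1)) := add_le_add_right h4 _
      _ ≤ r₀*δ + θ := add_le_add_right h5 _
  have h7 : r₀ * δ ≤ (r₀ + 1) * δ :=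
    mul_le_mul_of_nonneg_right (by linarith) hδ0
  linarith
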